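/- Let A be a complex normal matrix with eigenvalues λ₁ = ⋯ = λ_r and |λ₁| > |λ_{r+1}| ≥ ⋯ ≥ |λ_n|. Let q be a unit vector written as q = √(1-ε²) x* + ε ẑ where x* is a unit eigenvector for λ₁ and ẑ is a unit vector in the span of the eigenvectors for λ_{r+1},…,λ_n. Then the Rayleigh quotient ρ = q^H A q satisfies |ρ - λ₁| ≤ 2|λ₁| ε². -/

import Mathlib

/-!
Since `A` is normal, the eigenvector `x*` of `A` is also an eigenvector of `Aᴴ`, so
`⟪x*, A ẑ⟫ = λ₁ ⟪x*, ẑ⟫ = 0` and the cross terms of the Rayleigh quotient vanish: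
`ρ = (1 - ε²) λ₁ + ε² ⟪ẑ, A ẑ⟫`. Expanding `ẑ` in the orthonormal eigenvectors `x_j`, `j ≥ r`,
gives `|⟪ẑ, A ẑ⟫| ≤ max_{j ≥ r} |λ_j| ≤ |λ₁|`, hence `|ρ - λ₁| = ε² |⟪ẑ, A ẑ⟫ - λ₁| ≤ 2 |λ₁| ε²`.
-/

open Matrix ComplexConjugate

section

variable {𝕜 E : Type*} [RCLike 𝕜] [NormedAddCommGroup E] [InnerProductSpace 𝕜 E]

theorem IsStarNormal.adjoint_apply_eq_smul_of_apply_eq_smul [CompleteSpace E] {T : E →L[𝕜] E}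
    (hT : IsStarNormal T) {x : E} {μ : 𝕜} (hx : T x = μ • x) :
    ContinuousLinearMap.adjoint T x = conj μ • x := by
  have hS : IsStarNormal (T - μ • 1) := ⟨by
    simp only [Commute, SemiconjBy, star_sub, star_smul, star_one, sub_mul, mul_sub,
      smul_mul_assoc, mul_smul_comm, one_mul, mul_one, hT.star_comm_self.eq]
    module⟩
  have h := (ContinuousLinearMap.IsStarNormal.adjoint_apply_eq_zero_iff hS x).2 (by simp [hx])
  simpa [← ContinuousLinearMap.star_eq_adjoint, sub_eq_zero] using h

theorem IsStarNormal.inner_smul_add_smul_apply [CompleteSpace E] {T : E →L[𝕜] E}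
    (hT : IsStarNormal T) {x z : E} {μ : 𝕜} (hx : T x = μ • x) (hx1 : ‖x‖ = 1)
    (hxz : inner 𝕜 x z = 0) (a b : 𝕜) :
    inner 𝕜 (a • x + b • z) (T (a • x + b • z)) =
      conj a * a * μ + conj b * b * inner 𝕜 z (T z) := by
  have hxx : inner 𝕜 x x = (1 : 𝕜) := by simp [hx1]
  have hzx : inner 𝕜 z x = (0 : 𝕜) := by rw [← inner_conj_symm, hxz, map_zero]
  have hxTz : inner 𝕜 x (T z) = (0 : 𝕜) := by
    rw [← ContinuousLinearMap.adjoint_inner_left,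
      hT.adjoint_apply_eq_smul_of_apply_eq_smul hx, inner_smul_left, hxz, mul_zero]
  simp only [map_add, map_smul, hx, inner_add_left, inner_add_right, inner_smul_left,
    inner_smul_right, hxx, hzx, hxTz]
  ring

theorem Orthonormal.norm_inner_apply_self_le {ι : Type*} {v : ι → E} (hv : Orthonormal 𝕜 v)
    {T : E →ₗ[𝕜] E} {μ : ι → 𝕜} (hTv : ∀ i, T (v i) = μ i • v i) {s : Set ι} {M : ℝ}
    (hμ : ∀ i ∈ s, ‖μ i‖ ≤ M) {z : E} (hz : z ∈ Submodule.span 𝕜 (v '' s)) :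
    ‖inner 𝕜 z (T z)‖ ≤ M * ‖z‖ ^ 2 := by
  obtain ⟨l, hls, rfl⟩ := Finsupp.mem_span_image_iff_linearCombination 𝕜 |>.1 hz
  have hTz : T (Finsupp.linearCombination 𝕜 v l) = ∑ i ∈ l.support, (l i * μ i) • v i := by
    simp [Finsupp.linearCombination_apply, Finsupp.sum, hTv, smul_smul]
  have hnorm : ‖Finsupp.linearCombination 𝕜 v l‖ ^ 2 = ∑ i ∈ l.support, ‖l i‖ ^ 2 := by
    have h := hv.inner_sum l l l.support
    simp only [inner_self_eq_norm_sq_to_K, RCLike.conj_mul] at h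
    rw [Finsupp.linearCombination_apply, Finsupp.sum]
    exact_mod_cast h
  rw [hTz, hnorm, Finsupp.linearCombination_apply, Finsupp.sum, hv.inner_sum, Finset.mul_sum]
  refine (norm_sum_le _ _).trans (Finset.sum_le_sum fun i hi => ?_)
  rw [norm_mul, norm_mul, RCLike.norm_conj, ← mul_assoc, ← sq, mul_comm]
  exact mul_le_mul_of_nonneg_right (hμ i (hls hi)) (sq_nonneg _)

end

/-- The Rayleigh quotient of a normal matrix converges twice as fast as the
eigenvector approximation: `|ρ - λ₁| ≤ 2 |λ₁| ε²`. -/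
theorem rayleigh_quotient_error_bound
    {n : ℕ} (A : Matrix (Fin n) (Fin n) ℂ) (hA : A * Aᴴ = Aᴴ * A)
    (lam : Fin n → ℂ) (x : Fin n → EuclideanSpace ℂ (Fin n))
    (hortho : Orthonormal ℂ x)
    (heig : ∀ j, A.mulVec (x j) = lam j • x j)
    (r : ℕ) (hrn : r < n)
    (hdom : ‖lam ⟨r, hrn⟩‖ < ‖lam ⟨0, by omega⟩‖)
    (horder : ∀ j : Fin n, r ≤ (j : ℕ) →
      ‖lam j‖ ≤ ‖lam ⟨r, hrn⟩‖)
    (xstar zhat : EuclideanSpace ℂ (Fin n))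
    (hxstar : ‖xstar‖ = 1)
    (hxeig : A.mulVec xstar = lam ⟨0, by omega⟩ • xstar)
    (hzhat : ‖zhat‖ = 1)
    (hzhat_span : zhat ∈ Submodule.span ℂ (x '' {j | r ≤ (j : ℕ)}))
    (hperp : (inner ℂ xstar zhat : ℂ) = 0)
    (ε : ℝ) (hε : 0 ≤ ε) (hε1 : ε ≤ 1)
    (q : EuclideanSpace ℂ (Fin n))
    (hq : q = (Real.sqrt (1 - ε ^ 2) : ℂ) • xstar + (ε : ℂ) • zhat) :
    ‖(inner ℂ q ((WithLp.toLp 2 (A.mulVec q) : EuclideanSpace ℂ (Fin n))) : ℂ)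
        - lam ⟨0, by omega⟩‖
      ≤ 2 * ‖lam ⟨0, by omega⟩‖ * ε ^ 2 := by
  set μ := lam ⟨0, by omega⟩
  set T := toEuclideanCLM (𝕜 := ℂ) A
  have hT : IsStarNormal T := have : IsStarNormal A := ⟨hA.symm⟩; IsStarNormal.map _ A
  have hw : ‖inner ℂ zhat (T zhat)‖ ≤ ‖μ‖ := by
    simpa [hzhat] using hortho.norm_inner_apply_self_le (T := (T : _ →ₗ[ℂ] _))
      (fun j => congrArg (WithLp.toLp 2) (heig j))
      (fun j hj => (horder j hj).trans hdom.le) hzhat_span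
  have hρ : inner ℂ q (T q) - μ = (ε : ℂ) ^ 2 * (inner ℂ zhat (T zhat) - μ) := by
    rw [hq, hT.inner_smul_add_smul_apply (congrArg (WithLp.toLp 2) hxeig) hxstar hperp]
    simp only [Complex.conj_ofReal, ← sq, ← Complex.ofReal_pow,
      Real.sq_sqrt (by nlinarith : 0 ≤ 1 - ε ^ 2)]
    push_cast
    ring
  calc ‖inner ℂ q (T q) - μ‖ = ε ^ 2 * ‖inner ℂ zhat (T zhat) - μ‖ := by
        rw [hρ, norm_mul, norm_pow, Complex.norm_real, Real.norm_eq_abs, sq_abs]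
    _ ≤ ε ^ 2 * (‖μ‖ + ‖μ‖) := by gcongr; exact (norm_sub_le _ _).trans (by gcongr)
    _ = 2 * ‖μ‖ * ε ^ 2 := by ring
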